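/- In the quadratic space ℚ³⁰ with bilinear form given by the intersection matrix M of the curves E_{ij}^β indexed by pairs {i,j} ⊂ {1,…,5} and β ∈ μ₃ (diagonal −3; entry 1 when index pairs disjoint; else 0), let (a₁,…,a₅) ∈ μ₃⁵ with a₁a₂a₃a₄a₅ = 1 and let D = Σ_{1 ≤ i < j ≤ 5} v_{ij}^{aᵢ/aⱼ} (a sum of 10 basis vectors, one for each pair). Then ⟨D, D⟩ = 0 and ⟨Σ, D⟩ = 60 where Σ is the sum of all 30 basis vectors; consequently the arithmetic genus 1 + (D² + (Σ/2)·D)/2 equals 16. -/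

import Mathlib

open Finset

/-!
Off the diagonal, `M` only sees the index pairs, and two pairs meet with intersection `1`
exactly when they are disjoint, i.e. adjacent in the Petersen graph, which is `3`-regular.
A divisor `D` taking one curve over each pair therefore meets each of its components in
`-3 + 3 = 0`, so `D² = 0`; and the three curves over each pair meet a fixed component of `D`
in `-3 + 3 · 3 = 6`, so `Σ · D = 10 · 6 = 60`. Hence the genus is `1 + (0 + 30) / 2 = 16`.
-/

/-- Index set for the 30 elliptic curves `E_{ij}^β`: a pair `i < j` in `Fin 5`
together with `β ∈ μ₃` encoded as `ZMod 3`. -/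
abbrev Idx : Type := {p : Fin 5 × Fin 5 // p.1 < p.2} × ZMod 3

/-- The 30×30 intersection matrix of the curves `E_{ij}^β`: `−3` on the diagonal,
`1` between indices with disjoint pairs `{i,j} ∩ {s,t} = ∅`, and `0` otherwise. -/
def M : Matrix Idx Idx ℚ := fun x y =>
  if x = y then -3
  else if x.1.1.1 ≠ y.1.1.1 ∧ x.1.1.1 ≠ y.1.1.2 ∧ x.1.1.2 ≠ y.1.1.1 ∧ x.1.1.2 ≠ y.1.1.2
  then 1 else 0

/-- The pairing given by the intersection matrix `M`. -/
def pair (x y : Idx → ℚ) : ℚ := dotProduct x (M.mulVec y)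

/-- The sum `Σ` of all 30 basis vectors. -/
def Sig : Idx → ℚ := ∑ x : Idx, Pi.single x 1

abbrev IndexPair : Type := {p : Fin 5 × Fin 5 // p.1 < p.2}

def PairsDisjoint (p q : IndexPair) : Prop :=
  p.1.1 ≠ q.1.1 ∧ p.1.1 ≠ q.1.2 ∧ p.1.2 ≠ q.1.1 ∧ p.1.2 ≠ q.1.2

instance : DecidableRel PairsDisjoint := fun p q => by
  unfold PairsDisjoint; infer_instance

theorem card_indexPair : Fintype.card IndexPair = 10 := rfl

theorem not_pairsDisjoint_self (p : IndexPair) : ¬ PairsDisjoint p p := by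
  simp [PairsDisjoint]

theorem card_pairsDisjoint (q : IndexPair) : #{p | PairsDisjoint p q} = 3 := by
  revert q; decide

theorem M_apply (x y : Idx) :
    M x y = (if x = y then -3 else 0) + if PairsDisjoint x.1 y.1 then 1 else 0 := by
  by_cases hxy : x = y
  · subst hxy
    simp [M, not_pairsDisjoint_self]
  · simp only [M, hxy, if_false, zero_add]
    rfl

theorem pair_sum_single {ι κ : Type*} [Fintype ι] [Fintype κ] (u : ι → Idx) (v : κ → Idx) :
    pair (∑ i, Pi.single (u i) 1) (∑ j, Pi.single (v j) 1) = ∑ i, ∑ j, M (u i) (v j) := by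
  simp only [pair, Matrix.mulVec_sum, Matrix.mulVec_single, MulOpposite.op_one, one_smul,
    dotProduct_sum, sum_dotProduct, single_dotProduct, Matrix.col_apply, one_mul]
  exact sum_comm

theorem pair_smul_left (c : ℚ) (x y : Idx → ℚ) : pair (c • x) y = c * pair x y :=
  smul_dotProduct c x _

def sectionDivisor (s : IndexPair → ZMod 3) : Idx → ℚ :=
  ∑ p, Pi.single (p, s p) 1

theorem sum_M_section_left (s : IndexPair → ZMod 3) (q : IndexPair) :
    ∑ p, M (p, s p) (q, s q) = 0 := by
  have hsection : ∀ p, ((p, s p) : Idx) = (q, s q) ↔ p = q := fun p =>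
    ⟨congrArg Prod.fst, fun h => h ▸ rfl⟩
  simp only [M_apply, hsection, sum_add_distrib, sum_ite_eq', mem_univ, if_true]
  rw [sum_boole, card_pairsDisjoint]
  norm_num

theorem sum_M_left (y : Idx) : ∑ x, M x y = 6 := by
  simp only [M_apply, sum_add_distrib, sum_ite_eq', mem_univ, if_true]
  rw [Fintype.sum_prod_type_right]
  simp only [sum_boole, card_pairsDisjoint, sum_const, card_univ, ZMod.card]
  norm_num

theorem pair_sectionDivisor_self (s : IndexPair → ZMod 3) :
    pair (sectionDivisor s) (sectionDivisor s) = 0 := by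
  rw [sectionDivisor, pair_sum_single, sum_comm]
  simp [sum_M_section_left]

theorem pair_Sig_sectionDivisor (s : IndexPair → ZMod 3) :
    pair Sig (sectionDivisor s) = 60 := by
  calc pair Sig (sectionDivisor s) = ∑ x, ∑ p, M x (p, s p) := pair_sum_single id _
    _ = 60 := by
      rw [sum_comm]
      simp only [sum_M_left, sum_const, card_univ, card_indexPair, nsmul_eq_mul]
      norm_num

theorem stmt_12_general (a : Fin 5 → ZMod 3) :
    let D : Idx → ℚ := ∑ p : {p : Fin 5 × Fin 5 // p.1 < p.2},
      Pi.single (⟨p, a p.1.1 - a p.1.2⟩ : Idx) (1 : ℚ)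
    pair D D = 0 ∧ pair Sig D = 60 ∧
      1 + (pair D D + pair ((2 : ℚ)⁻¹ • Sig) D) / 2 = 16 := by
  intro D
  have hDD : pair D D = 0 := pair_sectionDivisor_self _
  have hSD : pair Sig D = 60 := pair_Sig_sectionDivisor _
  refine ⟨hDD, hSD, ?_⟩
  rw [pair_smul_left, hDD, hSD]
  norm_num

/-- For `(a₁,…,a₅) ∈ μ₃⁵` with product `1` (encoded additively in `ZMod 3` with sum `0`)
and `D = Σ_{i<j} v_{ij}^{aᵢ/aⱼ}`: `⟨D,D⟩ = 0`, `⟨Σ,D⟩ = 60`, and the arithmetic genus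
`1 + (D² + (Σ/2)·D)/2` equals `16`. -/
theorem stmt_12 (a : Fin 5 → ZMod 3) (ha : ∑ i, a i = 0) :
    let D : Idx → ℚ := ∑ p : {p : Fin 5 × Fin 5 // p.1 < p.2},
      Pi.single (⟨p, a p.1.1 - a p.1.2⟩ : Idx) (1 : ℚ)
    pair D D = 0 ∧ pair Sig D = 60 ∧
      1 + (pair D D + pair ((2 : ℚ)⁻¹ • Sig) D) / 2 = 16 :=
  stmt_12_general a
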